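/- arXiv:1102.0948 — 2 statements merged into one kernel-verified Lean document; each statement's English description precedes it below -/
import Mathlib

section
/- There exist quantum channels Q, R: L(H_3) → L(H_3) with equal gate fidelity such that R ≠ Q + r(E − E†) for every r ≥ 0 and every unital quantum channel E. (Concretely, one may take Q unital and R non-unital with P_S(T ⊗ id_3)(C_Q − C_R)P_S = 0.) -/
open Matrix BigOperators
open scoped ComplexOrder

noncomputable section

/-- |φ⟩⟨φ| as a matrix. -/
def ketbra {n : ℕ} (φ : Fin n → ℂ) : Matrix (Fin n) (Fin n) ℂ :=
  Matrix.vecMulVec φ (star φ)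

/-- Quadratic form ⟨v|M|v⟩. -/
def qf {m : Type*} [Fintype m] (M : Matrix m m ℂ) (v : m → ℂ) : ℂ :=
  star v ⬝ᵥ M *ᵥ v

/-- Tensor (Kronecker) product of vectors |ψ⟩⊗|χ⟩. -/
def kron {n : ℕ} (ψ χ : Fin n → ℂ) : Fin n × Fin n → ℂ :=
  fun p => ψ p.1 * χ p.2

/-- Unit vector predicate. -/
def unitv {n : ℕ} (φ : Fin n → ℂ) : Prop := star φ ⬝ᵥ φ = 1

/-- Linear maps on L(H_n), represented as linear maps on n×n matrices. -/
abbrev MatMap (n : ℕ) := Matrix (Fin n) (Fin n) ℂ →ₗ[ℂ] Matrix (Fin n) (Fin n) ℂ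

/-- Choi matrix C_Λ = Σ_{i,j} |i⟩⟨j| ⊗ Λ(|i⟩⟨j|). -/
def choi {n : ℕ} (Λ : MatMap n) : Matrix (Fin n × Fin n) (Fin n × Fin n) ℂ :=
  Matrix.of fun p q => Λ (Matrix.single p.1 q.1 1) p.2 q.2

/-- Partial transpose on the first factor, i.e. (T ⊗ id_n)(M). -/
def ptA {n : ℕ} (M : Matrix (Fin n × Fin n) (Fin n × Fin n) ℂ) :
    Matrix (Fin n × Fin n) (Fin n × Fin n) ℂ :=
  Matrix.of fun p q => M (q.1, p.2) (p.1, q.2)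

/-- The flip (swap) operator F on H_n ⊗ H_n. -/
def flipOp (n : ℕ) : Matrix (Fin n × Fin n) (Fin n × Fin n) ℂ :=
  Matrix.of fun p q => if p.1 = q.2 ∧ p.2 = q.1 then 1 else 0

/-- Projection onto the symmetric subspace, P_S = (1/2)(I + F). -/
def Psym (n : ℕ) : Matrix (Fin n × Fin n) (Fin n × Fin n) ℂ :=
  (1/2 : ℂ) • (1 + flipOp n)

/-- Gate fidelity F_Λ(|φ⟩) = ⟨φ|Λ(|φ⟩⟨φ|)|φ⟩. -/
def fid {n : ℕ} (Λ : MatMap n) (φ : Fin n → ℂ) : ℂ := qf (Λ (ketbra φ)) φ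

/-- Trace preserving. -/
def IsTP {n : ℕ} (Λ : MatMap n) : Prop := ∀ X, (Λ X).trace = X.trace

/-- Completely positive (via Choi's theorem: Choi matrix PSD). -/
def IsCP {n : ℕ} (Λ : MatMap n) : Prop := (choi Λ).PosSemidef

/-- Quantum channel: completely positive and trace preserving. -/
def IsChannel {n : ℕ} (Λ : MatMap n) : Prop := IsCP Λ ∧ IsTP Λ

/-- Λd is the Hilbert–Schmidt dual of Λ : Tr(Λ(X)Y) = Tr(X Λd(Y)). -/
def IsDual {n : ℕ} (Λ Λd : MatMap n) : Prop :=
  ∀ X Y, (Λ X * Y).trace = (X * Λd Y).trace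

/-- Standard basis vector. -/
def stdV (n : ℕ) (i : Fin n) : Fin n → ℂ := Pi.single i 1

/-- The symmetric subspace S = span{|i⟩|j⟩ + |j⟩|i⟩}. -/
def Ssub (n : ℕ) : Submodule ℂ (Fin n × Fin n → ℂ) :=
  Submodule.span ℂ {v | ∃ i j, v = kron (stdV n i) (stdV n j) + kron (stdV n j) (stdV n i)}

/-- The maximally entangled state |ψ₊⟩ = (1/√n) Σ_j |jj⟩. -/
def psiPlus (n : ℕ) : Fin n × Fin n → ℂ :=
  fun p => if p.1 = p.2 then ((Real.sqrt n : ℂ))⁻¹ else 0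

/-!
Take `Q` the completely depolarizing channel and `R = Q + P`, where `P` is a traceless
perturbation with `⟨φ|P(|φ⟩⟨φ|)|φ⟩ = 0` for every `φ` (its Choi matrix is killed by
`P_S (T ⊗ id)`), but `P 1 ≠ 0`. The Choi matrix `1/3 + C_P` of `R` stays positive because
`C_P` only couples two pairs of basis vectors, with weight `1/6`. If `E` is trace preserving,
its dual `E†` is unital, so for unital `E` the map `Q + r (E - E†)` sends `1` to `Q 1`,
whereas `R 1 = Q 1 + P 1`.
-/

section Channels

variable {n : ℕ}

lemma fid_add (Λ Λ' : MatMap n) (φ : Fin n → ℂ) : fid (Λ + Λ') φ = fid Λ φ + fid Λ' φ := by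
  simp only [fid, qf, LinearMap.add_apply, Matrix.add_mulVec, dotProduct_add]

lemma IsDual.map_one_of_isTP {E Ed : MatMap n} (hd : IsDual E Ed) (hE : IsTP E) : Ed 1 = 1 :=
  Matrix.ext_iff_trace_mul_left.mpr fun X => by
    rw [← hd, mul_one, mul_one, hE]

lemma add_smul_sub_apply_one (Q E Ed : MatMap n) (c : ℂ) (hE : E 1 = 1) (hEd : Ed 1 = 1) :
    (Q + c • (E - Ed)) 1 = Q 1 := by
  simp [hE, hEd]

def depolarizing (n : ℕ) : MatMap n :=
  (Matrix.traceLinearMap (Fin n) ℂ ℂ).smulRight ((n : ℂ)⁻¹ • 1)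

lemma depolarizing_apply (X : Matrix (Fin n) (Fin n) ℂ) :
    depolarizing n X = X.trace • (n : ℂ)⁻¹ • 1 := rfl

lemma choi_depolarizing : choi (depolarizing n) = (n : ℂ)⁻¹ • 1 := by
  ext ⟨i, a⟩ ⟨j, b⟩
  by_cases hij : i = j <;> by_cases hab : a = b <;>
    simp [choi, depolarizing_apply, Matrix.one_apply, hij, hab]

lemma isChannel_depolarizing [NeZero n] : IsChannel (depolarizing n) := by
  refine ⟨?_, fun X => ?_⟩
  · rw [IsCP, choi_depolarizing]
    exact Matrix.PosSemidef.one.smul (by positivity)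
  · simp [depolarizing_apply, Matrix.trace_smul, NeZero.ne]

end Channels

-- The map with Choi matrix `(|01⟩⟨02| + |02⟩⟨01| - |00⟩⟨12| - |12⟩⟨00|) / 6` (Example 5.1).
def perturbation : MatMap 3 where
  toFun X := (6 : ℂ)⁻¹ • !![0, 0, -X 0 1; 0, 0, X 0 0; -X 1 0, X 0 0, 0]
  map_add' X Y := by ext i j; fin_cases i <;> fin_cases j <;> simp <;> ring
  map_smul' c X := by ext i j; fin_cases i <;> fin_cases j <;> simp <;> ring

lemma trace_perturbation (X : Matrix (Fin 3) (Fin 3) ℂ) : (perturbation X).trace = 0 := by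
  simp [perturbation, Matrix.trace_fin_three]

lemma fid_perturbation (φ : Fin 3 → ℂ) : fid perturbation φ = 0 := by
  simp only [fid, qf, perturbation, ketbra, LinearMap.coe_mk, AddHom.coe_mk, dotProduct,
    mulVec, Pi.star_apply, vecMulVec_apply, Matrix.smul_apply, of_apply, cons_val',
    cons_val_fin_one, cons_val_zero, cons_val_one, cons_val, Fin.sum_univ_three, smul_eq_mul]
  ring

lemma perturbation_one_ne_zero : perturbation 1 ≠ 0 := by
  intro h
  have := congrFun (congrFun h 1) 2
  simp [perturbation] at this

def symmVec : Fin 3 × Fin 3 → ℂ := Pi.single (0, 1) 1 + Pi.single (0, 2) 1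

def antiVec : Fin 3 × Fin 3 → ℂ := Pi.single (0, 0) 1 - Pi.single (1, 2) 1

def residualWeights (p : Fin 3 × Fin 3) : ℂ :=
  !![6⁻¹, 6⁻¹, 6⁻¹; 3⁻¹, 3⁻¹, 6⁻¹; 3⁻¹, 3⁻¹, 3⁻¹] p.1 p.2

lemma choi_depolarizing_add_perturbation :
    choi (depolarizing 3 + perturbation) =
      (6 : ℂ)⁻¹ • (vecMulVec symmVec (star symmVec) + vecMulVec antiVec (star antiVec))
        + diagonal residualWeights := by
  ext ⟨i, a⟩ ⟨j, b⟩
  fin_cases i <;> fin_cases a <;> fin_cases j <;> fin_cases b <;>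
    simp [choi, depolarizing_apply, perturbation, symmVec, antiVec, residualWeights,
      vecMulVec_apply, Matrix.one_apply] <;> norm_num

lemma isChannel_depolarizing_add_perturbation : IsChannel (depolarizing 3 + perturbation) := by
  refine ⟨?_, fun X => ?_⟩
  · rw [IsCP, choi_depolarizing_add_perturbation]
    refine .add (.smul (.add ?_ ?_) (by positivity)) (.diagonal fun p => ?_)
    · exact posSemidef_vecMulVec_self_star _
    · exact posSemidef_vecMulVec_self_star _
    · fin_cases p <;> simp [residualWeights]
  · rw [LinearMap.add_apply, Matrix.trace_add, trace_perturbation, add_zero]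
    exact isChannel_depolarizing.2 X

theorem stmt16 :
    ∃ Q R : MatMap 3, IsChannel Q ∧ IsChannel R ∧
      (∀ φ : Fin 3 → ℂ, unitv φ → fid Q φ = fid R φ) ∧
      ¬ ∃ r : ℝ, 0 ≤ r ∧ ∃ E Ed : MatMap 3, IsChannel E ∧ E 1 = 1 ∧ IsDual E Ed ∧
        R = Q + (r : ℂ) • (E - Ed) := by
  refine ⟨depolarizing 3, depolarizing 3 + perturbation, isChannel_depolarizing,
    isChannel_depolarizing_add_perturbation,
    fun φ _ => by rw [fid_add, fid_perturbation, add_zero], ?_⟩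
  rintro ⟨r, -, E, Ed, hE, hE1, hdual, hR⟩
  have hR1 := congrArg (· 1) hR
  simp only [add_smul_sub_apply_one _ E Ed _ hE1 (hdual.map_one_of_isTP hE.2),
    LinearMap.add_apply, add_eq_left] at hR1
  exact perturbation_one_ne_zero hR1
end
end

section
/- Let E: L(H_n) → L(H_n) be a quantum channel and λ₁ the maximal eigenvalue of P_S(T ⊗ id_n)(C_E)P_S. Then the minimum gate fidelity satisfies F_E^min := min_{|φ⟩ unit} ⟨φ|E(|φ⟩⟨φ|)|φ⟩ = λ₁ − ‖λ₁ P_S − P_S(T ⊗ id_n)(C_E)P_S‖_{S(1)}. -/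
open Matrix BigOperators
open scoped ComplexOrder

noncomputable section

/-! Write `P` for the symmetric projector and `A = (T ⊗ id)(C_E)`. Since `P (φ ⊗ φ) = φ ⊗ φ`,
`F_E(φ) = ⟨φφ|PAP|φφ⟩` and `λ₁ - F_E(φ) = ⟨φφ|X|φφ⟩` for `X = λ₁ P - PAP`, which is positive
semidefinite because `λ₁` bounds the spectrum of `PAP`. It remains to see that the supremum of
`⟨ψχ|X|ψχ⟩` over unit product vectors is already attained on symmetric ones `φ ⊗ φ`. Factor
`X = B* B`; as `X = PXP`, `⟨ψχ|X|ψχ⟩ = ‖B P(ψ ⊗ χ)‖²`, and the polarization identity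
`P(ψ ⊗ χ) = ¼ ((ψ+χ)⊗(ψ+χ) - (ψ-χ)⊗(ψ-χ))` with the triangle inequality bounds `‖B P(ψ ⊗ χ)‖`
by `¼ √S (‖ψ+χ‖² + ‖ψ-χ‖²) = √S`, where `S` is the supremum over symmetric product vectors
(parallelogram law). -/

open scoped MatrixOrder

section QuadraticForm

variable {m : Type*} [Fintype m]

lemma qf_sub (M N : Matrix m m ℂ) (v : m → ℂ) : qf (M - N) v = qf M v - qf N v := by
  simp [qf, Matrix.sub_mulVec, dotProduct_sub]

lemma qf_smul (c : ℂ) (M : Matrix m m ℂ) (v : m → ℂ) : qf (c • M) v = c * qf M v := by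
  simp [qf, Matrix.smul_mulVec, dotProduct_smul]

lemma qf_smul_right (M : Matrix m m ℂ) (c : ℂ) (v : m → ℂ) :
    qf M (c • v) = star c * c * qf M v := by
  simp only [qf, Matrix.mulVec_smul, star_smul, smul_dotProduct, dotProduct_smul, smul_eq_mul]
  ring

lemma qf_mul_mul_of_isHermitian {P : Matrix m m ℂ} (hP : P.IsHermitian) (A : Matrix m m ℂ)
    (v : m → ℂ) : qf (P * A * P) v = qf A (P *ᵥ v) := by
  rw [qf, ← Matrix.mulVec_mulVec, ← Matrix.mulVec_mulVec, Matrix.dotProduct_mulVec,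
    ← hP.eq, ← Matrix.star_mulVec, hP.eq, qf]

lemma star_dotProduct_self_eq_norm_sq (w : m → ℂ) :
    star w ⬝ᵥ w = ((‖WithLp.toLp 2 w‖ ^ 2 : ℝ) : ℂ) := by
  rw [dotProduct_comm, ← EuclideanSpace.inner_toLp_toLp, inner_self_eq_norm_sq_to_K]
  push_cast
  rfl

lemma Matrix.PosSemidef.exists_re_qf_eq_norm_sq {X : Matrix m m ℂ} (hX : X.PosSemidef) :
    ∃ B : Matrix m m ℂ, ∀ v, (qf X v).re = ‖WithLp.toLp 2 (B *ᵥ v)‖ ^ 2 := by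
  classical
  obtain ⟨B, rfl⟩ := CStarAlgebra.nonneg_iff_eq_star_mul_self.mp hX.nonneg
  refine ⟨B, fun v => ?_⟩
  rw [qf, ← Matrix.mulVec_mulVec, Matrix.dotProduct_mulVec, Matrix.star_eq_conjTranspose,
    ← Matrix.star_mulVec, star_dotProduct_self_eq_norm_sq, Complex.ofReal_re]

lemma posSemidef_smul_one_sub_of_eigenvalue_le [DecidableEq m] {M : Matrix m m ℂ}
    (hM : M.IsHermitian) {c : ℝ}
    (h : ∀ (x : ℝ) (v : m → ℂ), v ≠ 0 → M *ᵥ v = (x : ℂ) • v → x ≤ c) :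
    ((c : ℂ) • 1 - M).PosSemidef := by
  have hspec : ∀ x ∈ spectrum ℝ M, x ≤ c := by
    rintro x hx
    obtain ⟨i, rfl⟩ := hM.spectrum_real_eq_range_eigenvalues ▸ hx
    refine h _ _ (WithLp.ofLp_eq_zero 2 |>.ne.2 <| hM.eigenvectorBasis.orthonormal.ne_zero i) ?_
    rw [hM.mulVec_eigenvectorBasis, Complex.coe_smul]
  have := le_algebraMap_of_spectrum_le hspec hM.isSelfAdjoint
  rwa [Matrix.le_iff, Algebra.algebraMap_eq_smul_one, ← Complex.coe_smul] at this

end QuadraticForm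

lemma unitv_iff_norm_eq_one {n : ℕ} (φ : Fin n → ℂ) : unitv φ ↔ ‖WithLp.toLp 2 φ‖ = 1 := by
  rw [unitv, star_dotProduct_self_eq_norm_sq]
  norm_cast
  exact pow_eq_one_iff_of_nonneg (norm_nonneg _) two_ne_zero

lemma unitv_stdV {n : ℕ} (i : Fin n) : unitv (stdV n i) := by
  simp [unitv, stdV, dotProduct, Pi.single_apply, apply_ite]

lemma kron_smul_smul {n : ℕ} (a b : ℂ) (ψ χ : Fin n → ℂ) :
    kron (a • ψ) (b • χ) = (a * b) • kron ψ χ := by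
  funext p
  simp only [kron, Pi.smul_apply, smul_eq_mul]
  ring

lemma star_kron_dotProduct_kron {n : ℕ} (ψ χ : Fin n → ℂ) :
    star (kron ψ χ) ⬝ᵥ kron ψ χ = (star ψ ⬝ᵥ ψ) * (star χ ⬝ᵥ χ) := by
  simp only [dotProduct, Pi.star_apply, kron, star_mul', Finset.sum_mul_sum,
    Fintype.sum_prod_type]
  exact Finset.sum_congr rfl fun i _ => Finset.sum_congr rfl fun j _ => by ring

section SymmetricProjection

variable {n : ℕ}

lemma flipOp_mulVec (v : Fin n × Fin n → ℂ) : flipOp n *ᵥ v = fun p => v p.swap := by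
  funext p
  simp only [Matrix.mulVec, flipOp, Matrix.of_apply, dotProduct]
  rw [Finset.sum_eq_single p.swap]
  · simp
  · rintro q - hq
    rw [if_neg, zero_mul]
    rintro ⟨h1, h2⟩
    exact hq (Prod.ext h2.symm h1.symm)
  · simp

lemma flipOp_isHermitian : (flipOp n).IsHermitian := by
  ext p q
  simp [flipOp, Matrix.conjTranspose_apply, and_comm, eq_comm, apply_ite]

lemma flipOp_mul_self : flipOp n * flipOp n = 1 := by
  refine Matrix.ext_iff_mulVec.2 fun v => ?_
  simp [← Matrix.mulVec_mulVec, flipOp_mulVec]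

lemma Psym_isHermitian : (Psym n).IsHermitian := by
  simp only [Psym, IsHermitian, Matrix.conjTranspose_smul, Matrix.conjTranspose_add,
    Matrix.conjTranspose_one, flipOp_isHermitian.eq]
  norm_num

lemma Psym_mul_self : Psym n * Psym n = Psym n := by
  simp only [Psym, Matrix.smul_mul, Matrix.mul_smul, add_mul, mul_add,
    one_mul, mul_one, flipOp_mul_self]
  module

lemma Psym_mul_mul_Psym (A : Matrix (Fin n × Fin n) (Fin n × Fin n) ℂ) :
    Psym n * (Psym n * A * Psym n) * Psym n = Psym n * A * Psym n := by
  rw [← Matrix.mul_assoc, ← Matrix.mul_assoc, Psym_mul_self, Matrix.mul_assoc, Psym_mul_self]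

lemma Psym_mulVec_kron (ψ χ : Fin n → ℂ) :
    Psym n *ᵥ kron ψ χ = (1 / 2 : ℂ) • (kron ψ χ + kron χ ψ) := by
  funext p
  simp only [Psym, Matrix.smul_mulVec, Matrix.add_mulVec, flipOp_mulVec, Matrix.one_mulVec,
    Pi.smul_apply, Pi.add_apply, kron, Prod.fst_swap, Prod.snd_swap, smul_eq_mul]
  ring

lemma Psym_mulVec_kron_self (φ : Fin n → ℂ) : Psym n *ᵥ kron φ φ = kron φ φ := by
  rw [Psym_mulVec_kron]
  module

lemma Psym_mulVec_kron_eq_sub (ψ χ : Fin n → ℂ) :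
    Psym n *ᵥ kron ψ χ = (1 / 4 : ℂ) • (kron (ψ + χ) (ψ + χ) - kron (ψ - χ) (ψ - χ)) := by
  rw [Psym_mulVec_kron]
  funext p
  simp only [Pi.smul_apply, Pi.add_apply, Pi.sub_apply, kron, smul_eq_mul]
  ring

end SymmetricProjection

lemma re_qf_kron_self_le_mul_norm_pow {n : ℕ} {M : Matrix (Fin n × Fin n) (Fin n × Fin n) ℂ}
    {S : ℝ} (hS : ∀ φ : Fin n → ℂ, unitv φ → (qf M (kron φ φ)).re ≤ S) (z : Fin n → ℂ) :
    (qf M (kron z z)).re ≤ S * ‖WithLp.toLp 2 z‖ ^ 4 := by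
  rcases eq_or_ne z 0 with rfl | hz
  · have : kron (0 : Fin n → ℂ) 0 = 0 := funext fun _ => by simp [kron]
    simp [qf, this]
  set r := ‖WithLp.toLp 2 z‖
  set u : Fin n → ℂ := (r⁻¹ : ℂ) • z
  have hu : unitv u := by
    rw [unitv_iff_norm_eq_one, WithLp.toLp_smul]
    exact norm_smul_inv_norm (by simpa using hz)
  have hzu : kron z z = ((r ^ 2 : ℝ) : ℂ) • kron u u := by
    have hr : (r : ℂ) ≠ 0 := by simpa [r] using hz
    have hc : ((r ^ 2 : ℝ) : ℂ) * ((r : ℂ)⁻¹ * (r : ℂ)⁻¹) = 1 := by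
      push_cast
      field_simp
    rw [kron_smul_smul, smul_smul, hc, one_smul]
  rw [hzu, qf_smul_right, Complex.star_def, Complex.conj_ofReal, ← Complex.ofReal_mul,
    Complex.re_ofReal_mul]
  nlinarith [hS u hu, pow_nonneg (norm_nonneg (WithLp.toLp 2 z)) 2]

lemma re_qf_kron_le_of_forall_unitv_re_qf_kron_self_le {n : ℕ}
    {X : Matrix (Fin n × Fin n) (Fin n × Fin n) ℂ} (hX : X.PosSemidef)
    (hXP : Psym n * X * Psym n = X) {S : ℝ}
    (hS : ∀ φ : Fin n → ℂ, unitv φ → (qf X (kron φ φ)).re ≤ S)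
    {ψ χ : Fin n → ℂ} (hψ : unitv ψ) (hχ : unitv χ) : (qf X (kron ψ χ)).re ≤ S := by
  obtain ⟨B, hB⟩ := hX.exists_re_qf_eq_norm_sq
  set N : (Fin n × Fin n → ℂ) → ℝ := fun v => ‖WithLp.toLp 2 (B *ᵥ v)‖ with hN
  have hS0 : 0 ≤ S := (hX.re_dotProduct_nonneg _).trans (hS ψ hψ)
  have hsym (z : Fin n → ℂ) : N (kron z z) ≤ √S * ‖WithLp.toLp 2 z‖ ^ 2 := by
    rw [← pow_le_pow_iff_left₀ (norm_nonneg _) (by positivity) two_ne_zero, mul_pow,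
      Real.sq_sqrt hS0, ← pow_mul, ← hB]
    exact re_qf_kron_self_le_mul_norm_pow hS z
  have hpar : ‖WithLp.toLp 2 (ψ + χ)‖ ^ 2 + ‖WithLp.toLp 2 (ψ - χ)‖ ^ 2 = 4 := by
    have := parallelogram_law_with_norm ℂ (WithLp.toLp 2 ψ) (WithLp.toLp 2 χ)
    rw [(unitv_iff_norm_eq_one ψ).1 hψ, (unitv_iff_norm_eq_one χ).1 hχ] at this
    rw [WithLp.toLp_add, WithLp.toLp_sub]
    linarith
  have hPψχ : N (Psym n *ᵥ kron ψ χ) ≤ √S := calc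
    N (Psym n *ᵥ kron ψ χ)
        = 1 / 4 * N (kron (ψ + χ) (ψ + χ) - kron (ψ - χ) (ψ - χ)) := by
      simp only [hN, Psym_mulVec_kron_eq_sub, Matrix.mulVec_smul, WithLp.toLp_smul, norm_smul]
      norm_num
    _ ≤ 1 / 4 * (N (kron (ψ + χ) (ψ + χ)) + N (kron (ψ - χ) (ψ - χ))) := by
      gcongr
      simp only [hN, Matrix.mulVec_sub, WithLp.toLp_sub]
      exact norm_sub_le _ _
    _ ≤ 1 / 4 * (√S * ‖WithLp.toLp 2 (ψ + χ)‖ ^ 2 + √S * ‖WithLp.toLp 2 (ψ - χ)‖ ^ 2) := by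
      gcongr <;> apply hsym
    _ = √S := by rw [← mul_add, hpar]; ring
  calc (qf X (kron ψ χ)).re = N (Psym n *ᵥ kron ψ χ) ^ 2 := by
        rw [← hXP, qf_mul_mul_of_isHermitian Psym_isHermitian, hB]
    _ ≤ √S ^ 2 := pow_le_pow_left₀ (norm_nonneg _) hPψχ 2
    _ = S := Real.sq_sqrt hS0

section Fidelity

variable {n : ℕ} (E : MatMap n) (φ : Fin n → ℂ)

lemma map_ketbra_eq_sum :
    E (ketbra φ) = ∑ c, ∑ a, (φ c * star (φ a)) • E (Matrix.single c a 1) := by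
  conv_lhs => rw [Matrix.matrix_eq_sum_single (ketbra φ)]
  simp only [map_sum, ← map_smul, Matrix.smul_single, smul_eq_mul, mul_one]
  rfl

lemma fid_eq_qf_ptA_choi : fid E φ = qf (ptA (choi E)) (kron φ φ) := by
  simp only [fid, qf, map_ketbra_eq_sum, dotProduct, Matrix.mulVec, Fintype.sum_prod_type,
    Matrix.sum_apply, Matrix.smul_apply, ptA, choi, kron, Matrix.of_apply, Finset.mul_sum,
    Finset.sum_mul, Pi.star_apply, star_mul', smul_eq_mul]
  conv_rhs => rw [Finset.sum_comm]
  refine Finset.sum_congr rfl fun b _ => ?_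
  conv_lhs => enter [2, d]; rw [Finset.sum_comm]
  rw [Finset.sum_comm]
  refine Finset.sum_congr rfl fun a _ => ?_
  rw [Finset.sum_comm]
  exact Finset.sum_congr rfl fun c _ => Finset.sum_congr rfl fun d _ => by ring

lemma fid_eq_qf_choi : fid E φ = qf (choi E) (kron (star φ) φ) := by
  simp only [fid, qf, map_ketbra_eq_sum, dotProduct, Matrix.mulVec, Fintype.sum_prod_type,
    Matrix.sum_apply, Matrix.smul_apply, choi, kron, Matrix.of_apply, Finset.mul_sum,
    Finset.sum_mul, Pi.star_apply, star_mul', smul_eq_mul, star_star]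
  conv_rhs => rw [Finset.sum_comm]
  refine Finset.sum_congr rfl fun b _ => ?_
  rw [Finset.sum_comm]
  refine Finset.sum_congr rfl fun c _ => ?_
  rw [Finset.sum_comm]
  exact Finset.sum_congr rfl fun a _ => Finset.sum_congr rfl fun d _ => by ring

end Fidelity

lemma IsCP.re_fid_nonneg {n : ℕ} {E : MatMap n} (hE : IsCP E) (φ : Fin n → ℂ) :
    0 ≤ (fid E φ).re := by
  rw [fid_eq_qf_choi]
  exact hE.re_dotProduct_nonneg _

lemma ptA_isHermitian {n : ℕ} {M : Matrix (Fin n × Fin n) (Fin n × Fin n) ℂ}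
    (hM : M.IsHermitian) : (ptA M).IsHermitian := by
  ext p q
  simp only [Matrix.conjTranspose_apply, ptA, Matrix.of_apply]
  rw [← hM.apply, star_star]

lemma csInf_eq_sub_csSup {L R : Set ℝ} {c : ℝ} (hL : L.Nonempty)
    (hLR : ∀ l ∈ L, c - l ∈ R) (hRL : ∀ r ∈ R, r ≤ c - sInf L) : sInf L = c - sSup R := by
  have hlub : IsLUB R (c - sInf L) := by
    refine ⟨hRL, fun b hb => ?_⟩
    have : c - b ≤ sInf L := le_csInf hL fun l hl => by linarith [hb (hLR l hl)]
    linarith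
  obtain ⟨l, hl⟩ := hL
  rw [hlub.csSup_eq ⟨_, hLR l hl⟩]
  ring

section SymmetricGap

variable {n : ℕ} (A : Matrix (Fin n × Fin n) (Fin n × Fin n) ℂ) (c : ℝ)

lemma smul_Psym_sub_eq :
    (c : ℂ) • Psym n - Psym n * A * Psym n
      = Psym n * ((c : ℂ) • 1 - Psym n * A * Psym n) * Psym n := by
  rw [Matrix.mul_sub, Matrix.sub_mul, Matrix.mul_smul, Matrix.mul_one, Matrix.smul_mul,
    Psym_mul_self, Psym_mul_mul_Psym]

lemma Psym_mul_smul_Psym_sub_mul_Psym :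
    Psym n * ((c : ℂ) • Psym n - Psym n * A * Psym n) * Psym n
      = (c : ℂ) • Psym n - Psym n * A * Psym n := by
  rw [smul_Psym_sub_eq, Psym_mul_mul_Psym]

variable {A c}

lemma posSemidef_smul_Psym_sub (hA : A.IsHermitian)
    (h : ∀ (x : ℝ) (v : Fin n × Fin n → ℂ), v ≠ 0 →
      (Psym n * A * Psym n) *ᵥ v = (x : ℂ) • v → x ≤ c) :
    ((c : ℂ) • Psym n - Psym n * A * Psym n).PosSemidef := by
  have hPAP := isHermitian_conjTranspose_mul_mul (Psym n) hA
  rw [Psym_isHermitian.eq] at hPAP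
  have := (posSemidef_smul_one_sub_of_eigenvalue_le hPAP h).conjTranspose_mul_mul_same (Psym n)
  rwa [Psym_isHermitian.eq, ← smul_Psym_sub_eq] at this

lemma re_qf_smul_Psym_sub_kron_self {φ : Fin n → ℂ} (hφ : unitv φ) :
    (qf ((c : ℂ) • Psym n - Psym n * A * Psym n) (kron φ φ)).re = c - (qf A (kron φ φ)).re := by
  have hP : qf (Psym n) (kron φ φ) = 1 := by
    rw [qf, Psym_mulVec_kron_self, star_kron_dotProduct_kron, show star φ ⬝ᵥ φ = 1 from hφ,
      one_mul]
  rw [qf_sub, qf_smul, hP, qf_mul_mul_of_isHermitian Psym_isHermitian, Psym_mulVec_kron_self,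
    mul_one, Complex.sub_re, Complex.ofReal_re]

end SymmetricGap

theorem stmt19 {n : ℕ} (E : MatMap n) (hE : IsChannel E) (lam1 : ℝ)
    (hlam : IsGreatest {x : ℝ | ∃ v : Fin n × Fin n → ℂ, v ≠ 0 ∧
        (Psym n * ptA (choi E) * Psym n) *ᵥ v = (x : ℂ) • v} lam1) :
    sInf {r : ℝ | ∃ φ : Fin n → ℂ, unitv φ ∧ r = (fid E φ).re} =
      lam1 - sSup {r : ℝ | ∃ ψ χ : Fin n → ℂ, unitv ψ ∧ unitv χ ∧
        r = (qf ((lam1 : ℂ) • Psym n - Psym n * ptA (choi E) * Psym n) (kron ψ χ)).re} := by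
  set X := (lam1 : ℂ) • Psym n - Psym n * ptA (choi E) * Psym n
  have hX : X.PosSemidef := posSemidef_smul_Psym_sub (ptA_isHermitian hE.1.isHermitian)
    fun x v hv hx => hlam.2 ⟨v, hv, hx⟩
  have hdiag (φ : Fin n → ℂ) (hφ : unitv φ) : (qf X (kron φ φ)).re = lam1 - (fid E φ).re := by
    rw [fid_eq_qf_ptA_choi]
    exact re_qf_smul_Psym_sub_kron_self hφ
  have hbdd : BddBelow {r : ℝ | ∃ φ : Fin n → ℂ, unitv φ ∧ r = (fid E φ).re} :=
    ⟨0, by rintro _ ⟨φ, -, rfl⟩; exact hE.1.re_fid_nonneg φ⟩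
  obtain ⟨v, hv, -⟩ := hlam.1
  obtain ⟨p, -⟩ := Function.ne_iff.mp hv
  refine csInf_eq_sub_csSup ⟨_, stdV n p.1, unitv_stdV p.1, rfl⟩ ?_ ?_
  · rintro _ ⟨φ, hφ, rfl⟩
    exact ⟨φ, φ, hφ, hφ, (hdiag φ hφ).symm⟩
  · rintro _ ⟨ψ, χ, hψ, hχ, rfl⟩
    refine re_qf_kron_le_of_forall_unitv_re_qf_kron_self_le hX
      (Psym_mul_smul_Psym_sub_mul_Psym _ _) (fun φ hφ => ?_) hψ hχ
    linarith [hdiag φ hφ, csInf_le hbdd ⟨φ, hφ, rfl⟩]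
end
end
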